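/- Let U : Δ → Δ be an expanding Young tower with μ(Δ_n) ≤ C·ρⁿ for some ρ < 1. Let φ : Δ₀ → ℕ be the first return time to the basis (φ(x) = inf{n ≥ 1 : Uⁿx ∈ Δ₀}) and U₀ x = U^{φ(x)} x the induced map. Then there exists a constant C' such that for every finite subset F ⊂ ℕ and every family of positive integers (n_i)_{i ∈ F}, μ({x ∈ Δ₀ : ∀ i ∈ F, φ(U₀^i x) = n_i}) ≤ ∏_{i ∈ F} (C'·ρ^{n_i}). -/

import Mathlib

open MeasureTheory Filter Set
open scoped ENNReal NNReal Topology Classical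

/-- A function `f : ℝ → ℝ` is slowly varying if `f (λ x) / f x → 1` as `x → ∞`,
for every `λ > 0`. -/
def SlowlyVarying (f : ℝ → ℝ) : Prop :=
  ∀ lam : ℝ, 0 < lam → Filter.Tendsto (fun x => f (lam * x) / f x) Filter.atTop (nhds 1)

/-- An expanding Young tower on a probability space `(Δ, μ)`, for the map `U`. -/
structure YoungTower {Δ : Type*} [MeasurableSpace Δ] (μ : Measure Δ) (U : Δ → Δ) where
  /-- the height of column `p` -/
  r : ℕ → ℕ
  r_pos : ∀ p, 0 < r p
  /-- `cell k p` is the element `Δ_{k,p}` of the partition -/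
  cell : ℕ → ℕ → Set Δ
  cell_meas : ∀ k p, MeasurableSet (cell k p)
  cell_empty : ∀ k p, r p ≤ k → cell k p = ∅
  cell_cover : ∀ x : Δ, ∃ p k, k < r p ∧ x ∈ cell k p
  cell_disj : ∀ k p k' p', (k, p) ≠ (k', p') → Disjoint (cell k p) (cell k' p')
  measurable_U : Measurable U
  measurePreserving_U : MeasurePreserving U μ μ
  isProb : IsProbabilityMeasure μ
  /-- `U` is a measurable isomorphism from `Δ_{k,p}` onto `Δ_{k+1,p}` when `k < r p - 1`... -/
  map_up : ∀ p k, k + 1 < r p → Set.BijOn U (cell k p) (cell (k + 1) p)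
  /-- ... which is measure preserving -/
  map_up_measure : ∀ p k, k + 1 < r p → ∀ A : Set Δ, A ⊆ cell k p → MeasurableSet A →
      μ (U '' A) = μ A
  /-- `U` is a measurable isomorphism from `Δ_{r_p - 1, p}` onto the basis `⋃ m, Δ_{0,m}` -/
  map_top : ∀ p, Set.BijOn U (cell (r p - 1) p) (⋃ m, cell 0 m)
  /-- the height function `ω` -/
  height : Δ → ℕ
  height_spec : ∀ k p, ∀ x ∈ cell k p, height x = k
  /-- the projection `π₀` to the basis -/
  proj : Δ → Δ
  proj_spec : ∀ k p, ∀ x ∈ cell k p, proj x ∈ cell 0 p ∧ U^[k] (proj x) = x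
  /-- the separation time -/
  s : Δ → Δ → ℕ
  s_eq_zero : ∀ x y : Δ, (¬ ∃ p k, k < r p ∧ x ∈ cell k p ∧ y ∈ cell k p) → s x y = 0
  s_mid : ∀ p k, k + 1 < r p → ∀ x ∈ cell k p, ∀ y ∈ cell k p, s x y = s (U x) (U y)
  s_top : ∀ p, ∀ x ∈ cell (r p - 1) p, ∀ y ∈ cell (r p - 1) p, s x y = 1 + s (U x) (U y)
  /-- the inverse of the Jacobian of `U` -/
  J : Δ → ℝ
  J_meas : Measurable J
  J_pos : ∀ x, 0 < J x
  J_spec : ∀ k p, ∀ A : Set Δ, A ⊆ cell k p → MeasurableSet A →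
      μ (U '' A) = ∫⁻ x in A, ENNReal.ofReal (J x)⁻¹ ∂μ
  /-- distortion constants -/
  Cd : ℝ
  β : ℝ
  Cd_pos : 0 < Cd
  β_pos : 0 < β
  β_lt_one : β < 1
  distortion : ∀ k p, ∀ x ∈ cell k p, ∀ y ∈ cell k p,
      |1 - J x / J y| ≤ Cd * β ^ (s (U x) (U y))

namespace YoungTower

variable {Δ : Type*} [MeasurableSpace Δ] {μ : Measure Δ} {U : Δ → Δ}

/-- The basis `Δ₀` of the tower. -/
def base (T : YoungTower μ U) : Set Δ := ⋃ m, T.cell 0 m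

/-- The set `Δ_n` of points at height `n`. -/
def level (T : YoungTower μ U) (n : ℕ) : Set Δ := ⋃ p, T.cell n p

/-- Exponentially small tails: `μ (Δ_n) ≤ C ρ^n`. -/
def ExpTails (T : YoungTower μ U) (C ρ : ℝ) : Prop :=
  ∀ n : ℕ, μ (T.level n) ≤ ENNReal.ofReal (C * ρ ^ n)

/-- `x` and `y` lie in the same element of the partition. -/
def SameCell (T : YoungTower μ U) (x y : Δ) : Prop :=
  ∃ p k, k < T.r p ∧ x ∈ T.cell k p ∧ y ∈ T.cell k p

/-- A function is locally Hölder (with constants `Cg`, `τ`) if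
`|g x - g y| ≤ Cg τ^(s x y)` for `x, y` in the same partition element. -/
def LocallyHolder (T : YoungTower μ U) (g : Δ → ℝ) (Cg τ : ℝ) : Prop :=
  ∀ x y : Δ, T.SameCell x y → |g x - g y| ≤ Cg * τ ^ (T.s x y)

/-- The first return time to the basis. -/
noncomputable def retTime (T : YoungTower μ U) (x : Δ) : ℕ :=
  sInf {n : ℕ | 0 < n ∧ U^[n] x ∈ T.base}

/-- The induced (first return) map on the basis. -/
noncomputable def retMap (T : YoungTower μ U) (x : Δ) : Δ := U^[T.retTime x] x

/-- `Ψ_n x`: the number of returns of `x` to the basis between times `1` and `n`. -/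
noncomputable def retCount (T : YoungTower μ U) (n : ℕ) (x : Δ) : ℕ :=
  ((Finset.Icc 1 n).filter fun k => U^[k] x ∈ T.base).card

/-- `G x = ∑_{j=0}^{ω(x)-1} g (U^j (π₀ x))`. -/
noncomputable def towerSum (T : YoungTower μ U) (g : Δ → ℝ) (x : Δ) : ℝ :=
  ∑ j ∈ Finset.range (T.height x), g (U^[j] (T.proj x))

/-- The transfer operator `Û u (x) = ∑_{U y = x} J y · u y`. -/
noncomputable def transfer (T : YoungTower μ U) (u : Δ → ℂ) (x : Δ) : ℂ :=
  ∑' y : {y : Δ // U y = x}, (T.J y.1 : ℂ) * u y.1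

/-- The perturbed transfer operator `Û_t u = Û (e^{itg} u)`. -/
noncomputable def transferPert (T : YoungTower μ U) (g : Δ → ℝ) (t : ℝ) (u : Δ → ℂ) :
    Δ → ℂ :=
  T.transfer fun y => Complex.exp (Complex.I * t * g y) * u y

/-- The weighted sup norm `‖u‖_m`. -/
noncomputable def normM (T : YoungTower μ U) (ε : ℝ) (u : Δ → ℂ) : ℝ≥0∞ :=
  sInf {C : ℝ≥0∞ | ∀ n : ℕ, ∀ᵐ x ∂μ, x ∈ T.level n →
    (‖u x‖₊ : ℝ≥0∞) ≤ C * ENNReal.ofReal (Real.exp (ε * n))}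

/-- The weighted Hölder seminorm `‖u‖_l`. -/
noncomputable def normL (T : YoungTower μ U) (ε τ : ℝ) (u : Δ → ℂ) : ℝ≥0∞ :=
  sInf {C : ℝ≥0∞ | ∀ n : ℕ, ∀ᵐ x ∂μ, ∀ᵐ y ∂μ,
    (x ∈ T.level n ∧ T.SameCell x y) →
    (‖u x - u y‖₊ : ℝ≥0∞) ≤ C * ENNReal.ofReal (Real.exp (ε * n) * τ ^ (T.s x y))}

/-- The norm `‖u‖ = ‖u‖_m + ‖u‖_l` of the Banach space `H`. -/
noncomputable def normH (T : YoungTower μ U) (ε τ : ℝ) (u : Δ → ℂ) : ℝ≥0∞ :=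
  T.normM ε u + T.normL ε τ u

/-- Membership in the Banach space `H`. -/
def MemH (T : YoungTower μ U) (ε τ : ℝ) (u : Δ → ℂ) : Prop :=
  Measurable u ∧ T.normH ε τ u < ⊤

end YoungTower

/-!
A point of `Δ₀` with return time `n` lies at the bottom of a column of height `n`, and `Uⁿ` maps
that bottom bijectively onto `Δ₀` with distortion at most `1 + C_d`. So the part of the bottom
sent into `E ⊆ Δ₀` has measure at most `(1 + C_d) μ(E) / μ(Δ₀)` times the measure of the bottom,
and summing over columns, `μ{φ = n, U₀ ∈ E} ≤ (1 + C_d) μ(Δ_{n-1}) μ(E) / μ(Δ₀) ≤ C' ρⁿ μ(E)`.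
Since `U₀` preserves `μ` on `Δ₀`, the condition at the smallest index of `F` can be moved to
time `0`, and induction on `F` yields the product bound.
-/

namespace YoungTower

variable {Δ : Type*} [MeasurableSpace Δ] {μ : Measure Δ} {U : Δ → Δ} (T : YoungTower μ U)

theorem measurableSet_base : MeasurableSet T.base :=
  MeasurableSet.iUnion fun m => T.cell_meas 0 m

theorem mem_base_iff {x : Δ} : x ∈ T.base ↔ ∃ p, x ∈ T.cell 0 p := mem_iUnion

theorem disjoint_cell_base {k : ℕ} (p : ℕ) (hk : k ≠ 0) : Disjoint (T.cell k p) T.base :=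
  disjoint_iUnion_right.2 fun m => T.cell_disj k p 0 m (by simp [hk])

theorem pairwise_disjoint_cell_inter (f : ℕ → ℕ) (g : ℕ → Set Δ) :
    Pairwise (Function.onFun Disjoint fun p => T.cell (f p) p ∩ g p) := fun p q hpq =>
  (T.cell_disj _ _ _ _ (by simp [hpq])).mono inter_subset_left inter_subset_left

theorem iterate_mem_cell {p k : ℕ} {x : Δ} (hx : x ∈ T.cell 0 p) (hk : k < T.r p) :
    U^[k] x ∈ T.cell k p := by
  induction k with
  | zero => simpa using hx
  | succ k ih =>
    rw [Function.iterate_succ_apply']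
    exact (T.map_up p k hk).mapsTo (ih (by omega))

theorem iterate_r_apply (p : ℕ) (x : Δ) : U^[T.r p] x = U (U^[T.r p - 1] x) := by
  rw [← Function.iterate_succ_apply' U, Nat.succ_eq_add_one, Nat.sub_add_cancel (T.r_pos p)]

theorem iterate_r_mem_base {p : ℕ} {x : Δ} (hx : x ∈ T.cell 0 p) : U^[T.r p] x ∈ T.base := by
  rw [iterate_r_apply]
  exact (T.map_top p).mapsTo (T.iterate_mem_cell hx (Nat.sub_lt (T.r_pos p) one_pos))

theorem exists_pos_iterate_mem_base (x : Δ) : ∃ n, 0 < n ∧ U^[n] x ∈ T.base := by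
  obtain ⟨p, k, hk, hx⟩ := T.cell_cover x
  obtain ⟨hproj, hx_eq⟩ := T.proj_spec k p x hx
  refine ⟨T.r p - k, by omega, ?_⟩
  rw [← hx_eq, ← Function.iterate_add_apply, Nat.sub_add_cancel hk.le]
  exact T.iterate_r_mem_base hproj

theorem retTime_eq_r {p : ℕ} {x : Δ} (hx : x ∈ T.cell 0 p) : T.retTime x = T.r p := by
  refine le_antisymm (Nat.sInf_le ⟨T.r_pos p, T.iterate_r_mem_base hx⟩) ?_
  refine le_csInf (T.exists_pos_iterate_mem_base x) fun n ⟨hn, hbase⟩ => ?_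
  by_contra! hlt
  exact disjoint_left.1 (T.disjoint_cell_base p hn.ne') (T.iterate_mem_cell hx hlt) hbase

theorem retMap_eq_iterate_r {p : ℕ} {x : Δ} (hx : x ∈ T.cell 0 p) :
    T.retMap x = U^[T.r p] x := by
  rw [retMap, T.retTime_eq_r hx]

theorem mapsTo_retMap_base : MapsTo T.retMap T.base T.base := fun x hx => by
  obtain ⟨p, hp⟩ := T.mem_base_iff.1 hx
  rw [T.retMap_eq_iterate_r hp]
  exact T.iterate_r_mem_base hp

theorem measurable_retTime : Measurable T.retTime := by
  convert measurable_find T.exists_pos_iterate_mem_base fun k =>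
    (MeasurableSet.const (0 < k)).inter (T.measurable_U.iterate k T.measurableSet_base) with x
  rw [retTime, Nat.sInf_def (s := {n | 0 < n ∧ U^[n] x ∈ T.base})
    (T.exists_pos_iterate_mem_base x)]
  congr

theorem measurable_retMap : Measurable T.retMap := by
  have hiter : Measurable fun q : Δ × ℕ => U^[q.2] q.1 :=
    measurable_from_prod_countable_left fun n => T.measurable_U.iterate n
  exact hiter.comp (measurable_id.prodMk T.measurable_retTime)

theorem measure_cell_inter_preimage {p k : ℕ} (hk : k + 1 < T.r p) {B : Set Δ}
    (hB : MeasurableSet B) (hBsub : B ⊆ T.cell (k + 1) p) :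
    μ (T.cell k p ∩ U ⁻¹' B) = μ B := by
  rw [← T.map_up_measure p k hk _ inter_subset_left ((T.cell_meas k p).inter (T.measurable_U hB)),
    image_inter_preimage, (T.map_up p k hk).image_eq, inter_eq_right.2 hBsub]

theorem measure_cell_inter_preimage_iterate {p k j : ℕ} (hj : k + j < T.r p) {B : Set Δ}
    (hB : MeasurableSet B) (hBsub : B ⊆ T.cell (k + j) p) :
    μ (T.cell k p ∩ U^[j] ⁻¹' B) = μ B := by
  induction j generalizing k with
  | zero => rw [Function.iterate_zero, preimage_id, inter_eq_right.2 (by simpa using hBsub)]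
  | succ j ih =>
    have hk : k + 1 < T.r p := by omega
    have hsplit : T.cell k p ∩ U^[j + 1] ⁻¹' B =
        T.cell k p ∩ U ⁻¹' (T.cell (k + 1) p ∩ U^[j] ⁻¹' B) := by
      ext x
      simp only [mem_inter_iff, mem_preimage, Function.iterate_succ_apply]
      exact ⟨fun h => ⟨h.1, (T.map_up p k hk).mapsTo h.1, h.2⟩, fun h => ⟨h.1, h.2.2⟩⟩
    rw [hsplit, T.measure_cell_inter_preimage hk
      ((T.cell_meas _ _).inter (T.measurable_U.iterate j hB)) inter_subset_left]
    exact ih (by omega) (by rwa [add_right_comm, add_assoc])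

theorem measure_cell_zero_inter_preimage_iterate_r (p : ℕ) {E : Set Δ} (hE : MeasurableSet E) :
    μ (T.cell 0 p ∩ U^[T.r p] ⁻¹' E) = μ (T.cell (T.r p - 1) p ∩ U ⁻¹' E) := by
  have htop : T.r p - 1 < T.r p := Nat.sub_lt (T.r_pos p) one_pos
  have hsplit : T.cell 0 p ∩ U^[T.r p] ⁻¹' E =
      T.cell 0 p ∩ U^[T.r p - 1] ⁻¹' (T.cell (T.r p - 1) p ∩ U ⁻¹' E) := by
    ext x
    simp only [mem_inter_iff, mem_preimage, iterate_r_apply]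
    exact ⟨fun h => ⟨h.1, T.iterate_mem_cell h.1 htop, h.2⟩, fun h => ⟨h.1, h.2.2⟩⟩
  rw [hsplit, T.measure_cell_inter_preimage_iterate (by simp [htop])
    ((T.cell_meas _ _).inter (T.measurable_U hE)) (by simp)]

theorem inv_J_le {p k : ℕ} {x y : Δ} (hx : x ∈ T.cell k p) (hy : y ∈ T.cell k p) :
    (T.J y)⁻¹ ≤ (1 + T.Cd) * (T.J x)⁻¹ := by
  have hβ : T.β ^ T.s (U x) (U y) ≤ 1 := pow_le_one₀ T.β_pos.le T.β_lt_one.le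
  have hratio : T.J x / T.J y ≤ 1 + T.Cd := by
    have := (abs_le.1 (T.distortion k p x hx y hy)).1
    nlinarith [T.Cd_pos]
  calc (T.J y)⁻¹ = T.J x / T.J y * (T.J x)⁻¹ := by field_simp [(T.J_pos x).ne']
    _ ≤ (1 + T.Cd) * (T.J x)⁻¹ := by gcongr; exact inv_nonneg.2 (T.J_pos x).le

theorem measure_mul_measure_image_cell_le {k p : ℕ} {B : Set Δ} (hB : MeasurableSet B)
    (hBsub : B ⊆ T.cell k p) :
    μ B * μ (U '' T.cell k p) ≤ ENNReal.ofReal (1 + T.Cd) * μ (U '' B) * μ (T.cell k p) := by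
  have hJ : Measurable fun x => ENNReal.ofReal (T.J x)⁻¹ :=
    ENNReal.measurable_ofReal.comp T.J_meas.inv
  have hpoint : ∀ y ∈ T.cell k p,
      μ B * ENNReal.ofReal (T.J y)⁻¹ ≤ ENNReal.ofReal (1 + T.Cd) * μ (U '' B) := by
    intro y hy
    rw [T.J_spec k p B hBsub hB, ← lintegral_const_mul _ hJ, mul_comm, ← setLIntegral_const]
    refine setLIntegral_mono (measurable_const.mul hJ) fun x hx => ?_
    rw [← ENNReal.ofReal_mul (by linarith [T.Cd_pos])]
    exact ENNReal.ofReal_le_ofReal (T.inv_J_le (hBsub hx) hy)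
  calc μ B * μ (U '' T.cell k p) = ∫⁻ y in T.cell k p, μ B * ENNReal.ofReal (T.J y)⁻¹ ∂μ := by
        rw [T.J_spec k p _ subset_rfl (T.cell_meas k p), lintegral_const_mul _ hJ]
    _ ≤ ∫⁻ _ in T.cell k p, ENNReal.ofReal (1 + T.Cd) * μ (U '' B) ∂μ :=
        setLIntegral_mono measurable_const hpoint
    _ = _ := setLIntegral_const _ _

theorem measure_base_ne_zero : μ T.base ≠ 0 := by
  have := T.isProb
  intro h0
  have hcover : (univ : Set Δ) ⊆ ⋃ n, U^[n] ⁻¹' T.base := fun x _ =>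
    mem_iUnion.2 ((T.exists_pos_iterate_mem_base x).imp fun _ h => h.2)
  have hnull : μ univ = 0 := measure_mono_null hcover <| measure_iUnion_null fun n => by
    rwa [(T.measurePreserving_U.iterate n).measure_preimage T.measurableSet_base.nullMeasurableSet]
  simp at hnull

theorem base_inter_preimage_retMap (E : Set Δ) :
    T.base ∩ T.retMap ⁻¹' E = ⋃ p, T.cell 0 p ∩ U^[T.r p] ⁻¹' E := by
  ext x
  simp only [mem_inter_iff, mem_preimage, mem_iUnion, T.mem_base_iff]
  constructor
  · rintro ⟨⟨p, hp⟩, hE⟩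
    exact ⟨p, hp, T.retMap_eq_iterate_r hp ▸ hE⟩
  · rintro ⟨p, hp, hE⟩
    exact ⟨⟨p, hp⟩, (T.retMap_eq_iterate_r hp).symm ▸ hE⟩

/-- Only the top cells of the columns are mapped into the basis. -/
theorem preimage_eq_iUnion_top_cell_inter {E : Set Δ} (hEsub : E ⊆ T.base) :
    U ⁻¹' E = ⋃ p, T.cell (T.r p - 1) p ∩ U ⁻¹' E := by
  refine Subset.antisymm (fun x hx => ?_) (iUnion_subset fun p => inter_subset_right)
  obtain ⟨p, k, hk, hxk⟩ := T.cell_cover x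
  obtain rfl : k = T.r p - 1 := by
    by_contra hne
    exact disjoint_left.1 (T.disjoint_cell_base p k.succ_ne_zero)
      ((T.map_up p k (by omega)).mapsTo hxk) (hEsub hx)
  exact mem_iUnion.2 ⟨p, hxk, hx⟩

theorem measure_base_inter_preimage_retMap {E : Set Δ} (hE : MeasurableSet E)
    (hEsub : E ⊆ T.base) : μ (T.base ∩ T.retMap ⁻¹' E) = μ E :=
  calc μ (T.base ∩ T.retMap ⁻¹' E) = ∑' p, μ (T.cell 0 p ∩ U^[T.r p] ⁻¹' E) := by
        rw [base_inter_preimage_retMap, measure_iUnion (T.pairwise_disjoint_cell_inter _ _)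
          fun p => (T.cell_meas 0 p).inter (T.measurable_U.iterate _ hE)]
    _ = ∑' p, μ (T.cell (T.r p - 1) p ∩ U ⁻¹' E) :=
        tsum_congr fun p => T.measure_cell_zero_inter_preimage_iterate_r p hE
    _ = μ (⋃ p, T.cell (T.r p - 1) p ∩ U ⁻¹' E) := (measure_iUnion
        (T.pairwise_disjoint_cell_inter _ _) fun p => (T.cell_meas _ p).inter (T.measurable_U hE)).symm
    _ = μ (U ⁻¹' E) := by rw [← T.preimage_eq_iUnion_top_cell_inter hEsub]
    _ = μ E := T.measurePreserving_U.measure_preimage hE.nullMeasurableSet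

theorem measure_base_inter_preimage_iterate_retMap {E : Set Δ} (hE : MeasurableSet E)
    (hEsub : E ⊆ T.base) (k : ℕ) : μ (T.base ∩ T.retMap^[k] ⁻¹' E) = μ E := by
  induction k with
  | zero => rw [Function.iterate_zero, preimage_id, inter_eq_right.2 hEsub]
  | succ k ih =>
    have hstep : T.base ∩ T.retMap^[k + 1] ⁻¹' E =
        T.base ∩ T.retMap ⁻¹' (T.base ∩ T.retMap^[k] ⁻¹' E) := by
      ext x
      simp only [mem_inter_iff, mem_preimage, Function.iterate_succ_apply]
      exact ⟨fun h => ⟨h.1, T.mapsTo_retMap_base h.1, h.2⟩, fun h => ⟨h.1, h.2.2⟩⟩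
    rw [hstep, T.measure_base_inter_preimage_retMap
      (T.measurableSet_base.inter (T.measurable_retMap.iterate k hE)) inter_subset_left, ih]

theorem measure_retTime_eq_retMap_mem_mul_le (n : ℕ) {E : Set Δ} (hE : MeasurableSet E)
    (hEsub : E ⊆ T.base) :
    μ {x | x ∈ T.base ∧ T.retTime x = n ∧ T.retMap x ∈ E} * μ T.base ≤
      ENNReal.ofReal (1 + T.Cd) * μ (T.level (n - 1)) * μ E := by
  have hcover : {x | x ∈ T.base ∧ T.retTime x = n ∧ T.retMap x ∈ E} ⊆
      ⋃ p : {p // T.r p = n}, T.cell 0 p ∩ U^[T.r p] ⁻¹' E := by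
    rintro x ⟨hx, hn, hE⟩
    obtain ⟨p, hp⟩ := T.mem_base_iff.1 hx
    refine mem_iUnion.2 ⟨⟨p, T.retTime_eq_r hp ▸ hn⟩, hp, ?_⟩
    rwa [mem_preimage, ← T.retMap_eq_iterate_r hp]
  have hcolumn : ∀ p : {p // T.r p = n}, μ (T.cell 0 p ∩ U^[T.r p] ⁻¹' E) * μ T.base ≤
      ENNReal.ofReal (1 + T.Cd) * μ (T.cell (n - 1) p) * μ E := by
    rintro ⟨p, rfl⟩
    have himage : U '' T.cell (T.r p - 1) p = T.base := (T.map_top p).image_eq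
    have hdist := T.measure_mul_measure_image_cell_le
      ((T.cell_meas (T.r p - 1) p).inter (T.measurable_U hE)) inter_subset_left
    rw [image_inter_preimage, himage, inter_eq_right.2 hEsub] at hdist
    rw [T.measure_cell_zero_inter_preimage_iterate_r p hE, mul_right_comm (ENNReal.ofReal _)]
    exact hdist
  have hlevel : ∑' p : {p // T.r p = n}, μ (T.cell (n - 1) p) ≤ μ (T.level (n - 1)) := by
    have hdisj : Pairwise (Function.onFun Disjoint (T.cell (n - 1))) := by
      simpa using T.pairwise_disjoint_cell_inter (fun _ => n - 1) (fun _ => univ)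
    rw [level, measure_iUnion hdisj (T.cell_meas _)]
    exact ENNReal.tsum_comp_le_tsum_of_injective Subtype.val_injective _
  calc μ {x | x ∈ T.base ∧ T.retTime x = n ∧ T.retMap x ∈ E} * μ T.base
      ≤ (∑' p : {p // T.r p = n}, μ (T.cell 0 p ∩ U^[T.r p] ⁻¹' E)) * μ T.base := by
        gcongr
        exact (measure_mono hcover).trans (measure_iUnion_le _)
    _ ≤ ∑' p : {p // T.r p = n}, ENNReal.ofReal (1 + T.Cd) * μ (T.cell (n - 1) p) * μ E := by
        rw [← ENNReal.tsum_mul_right]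
        exact ENNReal.tsum_le_tsum hcolumn
    _ ≤ ENNReal.ofReal (1 + T.Cd) * μ (T.level (n - 1)) * μ E := by
        rw [ENNReal.tsum_mul_right, ENNReal.tsum_mul_left]
        gcongr

theorem measure_retTime_eq_retMap_mem_le {C0 ρ : ℝ} (htails : T.ExpTails C0 ρ) (hρ0 : 0 < ρ)
    {n : ℕ} (hn : 0 < n) {E : Set Δ} (hE : MeasurableSet E) (hEsub : E ⊆ T.base) :
    μ {x | x ∈ T.base ∧ T.retTime x = n ∧ T.retMap x ∈ E} ≤
      ENNReal.ofReal ((1 + T.Cd) * C0 / (ρ * (μ T.base).toReal) * ρ ^ n) * μ E := by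
  have := T.isProb
  have hbase_top : μ T.base ≠ ⊤ := measure_ne_top μ T.base
  have hbase_pos : 0 < (μ T.base).toReal := ENNReal.toReal_pos T.measure_base_ne_zero hbase_top
  obtain ⟨k, rfl⟩ : ∃ k, n = k + 1 := ⟨n - 1, by omega⟩
  rw [← ENNReal.mul_le_mul_iff_left T.measure_base_ne_zero hbase_top]
  calc μ {x | x ∈ T.base ∧ T.retTime x = k + 1 ∧ T.retMap x ∈ E} * μ T.base
      ≤ ENNReal.ofReal (1 + T.Cd) * μ (T.level k) * μ E :=
        T.measure_retTime_eq_retMap_mem_mul_le _ hE hEsub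
    _ ≤ ENNReal.ofReal (1 + T.Cd) * ENNReal.ofReal (C0 * ρ ^ k) * μ E := by gcongr; exact htails k
    _ = ENNReal.ofReal ((1 + T.Cd) * C0 / (ρ * (μ T.base).toReal) * ρ ^ (k + 1) *
          (μ T.base).toReal) * μ E := by
        rw [← ENNReal.ofReal_mul (by linarith [T.Cd_pos])]
        congr 2
        field_simp
        ring
    _ = ENNReal.ofReal ((1 + T.Cd) * C0 / (ρ * (μ T.base).toReal) * ρ ^ (k + 1)) * μ E *
          μ T.base := by
        rw [ENNReal.ofReal_mul' hbase_pos.le, ENNReal.ofReal_toReal hbase_top, mul_right_comm]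

/-- Times are counted from `c`, so that the tail of a cylinder is again a cylinder
(`retCylinder_insert`); `i - c` truncates, so only `c ≤ min F` is meaningful. -/
def retCylinder (F : Finset ℕ) (m : ℕ → ℕ) (c : ℕ) : Set Δ :=
  {x | x ∈ T.base ∧ ∀ i ∈ F, T.retTime (T.retMap^[i - c] x) = m i}

theorem measurableSet_retCylinder (F : Finset ℕ) (m : ℕ → ℕ) (c : ℕ) :
    MeasurableSet (T.retCylinder F m c) := by
  have hset : T.retCylinder F m c =
      T.base ∩ ⋂ i ∈ F, T.retMap^[i - c] ⁻¹' (T.retTime ⁻¹' {m i}) := by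
    ext x
    simp [retCylinder]
  rw [hset]
  exact T.measurableSet_base.inter <| .biInter F.countable_toSet fun i _ =>
    T.measurable_retMap.iterate _ (T.measurable_retTime (measurableSet_singleton _))

theorem retCylinder_insert {a c : ℕ} {s : Finset ℕ} (m : ℕ → ℕ) (hca : c ≤ a)
    (has : ∀ i ∈ s, a < i) :
    T.retCylinder (insert a s) m c = T.base ∩ T.retMap^[a - c] ⁻¹'
      {y | y ∈ T.base ∧ T.retTime y = m a ∧ T.retMap y ∈ T.retCylinder s m (a + 1)} := by
  ext x
  have hshift : ∀ i ∈ s,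
      T.retMap^[i - (a + 1)] (T.retMap (T.retMap^[a - c] x)) = T.retMap^[i - c] x := by
    intro i hi
    rw [← Function.iterate_succ_apply' T.retMap, ← Function.iterate_add_apply]
    congr 1
    have := has i hi
    omega
  have hbase : x ∈ T.base → T.retMap^[a - c] x ∈ T.base := fun hx =>
    T.mapsTo_retMap_base.iterate _ hx
  simp only [retCylinder, Finset.forall_mem_insert, mem_inter_iff, mem_preimage, mem_ofPred_eq]
  constructor
  · rintro ⟨hx, ha, hs⟩
    exact ⟨hx, hbase hx, ha, T.mapsTo_retMap_base (hbase hx), fun i hi => hshift i hi ▸ hs i hi⟩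
  · rintro ⟨hx, -, ha, -, hs⟩
    exact ⟨hx, ha, fun i hi => hshift i hi ▸ hs i hi⟩

theorem measure_retCylinder_le_prod {κ : ℕ → ℝ≥0∞}
    (hκ : ∀ n, 0 < n → ∀ E, MeasurableSet E → E ⊆ T.base →
      μ {x | x ∈ T.base ∧ T.retTime x = n ∧ T.retMap x ∈ E} ≤ κ n * μ E)
    (F : Finset ℕ) (m : ℕ → ℕ) (hm : ∀ i ∈ F, 0 < m i) (c : ℕ) (hc : ∀ i ∈ F, c ≤ i) :
    μ (T.retCylinder F m c) ≤ ∏ i ∈ F, κ (m i) := by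
  induction F using Finset.induction_on_min generalizing c with
  | empty =>
    have := T.isProb
    simpa using prob_le_one
  | insert a s has ih =>
    have hca := hc a (Finset.mem_insert_self a s)
    rw [T.retCylinder_insert m hca has, Finset.prod_insert fun h => (has a h).false]
    have htail := T.measurableSet_retCylinder s m (a + 1)
    have hstep : MeasurableSet
        {y | y ∈ T.base ∧ T.retTime y = m a ∧ T.retMap y ∈ T.retCylinder s m (a + 1)} :=
      T.measurableSet_base.inter
        ((T.measurable_retTime (measurableSet_singleton _)).inter (T.measurable_retMap htail))
    rw [T.measure_base_inter_preimage_iterate_retMap hstep fun _ h => h.1]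
    calc _ ≤ κ (m a) * μ (T.retCylinder s m (a + 1)) :=
          hκ _ (hm a (Finset.mem_insert_self a s)) _ htail fun _ h => h.1
      _ ≤ κ (m a) * ∏ i ∈ s, κ (m i) := by
          gcongr
          exact ih (fun i hi => hm i (Finset.mem_insert_of_mem hi)) (a + 1) has

end YoungTower

theorem return_time_cylinder_estimate_general
    {Δ : Type*} [MeasurableSpace Δ] {μ : Measure Δ} {U : Δ → Δ}
    (T : YoungTower μ U)
    (C0 ρ : ℝ) (hC0 : 0 < C0) (hρ0 : 0 < ρ) (htails : T.ExpTails C0 ρ) :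
    ∃ C' : ℝ, 0 < C' ∧ ∀ (F : Finset ℕ) (m : ℕ → ℕ), (∀ i ∈ F, 0 < m i) →
      μ {x : Δ | x ∈ T.base ∧ ∀ i ∈ F, T.retTime (T.retMap^[i] x) = m i} ≤
        ENNReal.ofReal (∏ i ∈ F, C' * ρ ^ (m i)) := by
  have := T.isProb
  have hbase_pos : 0 < (μ T.base).toReal :=
    ENNReal.toReal_pos T.measure_base_ne_zero (measure_ne_top μ T.base)
  refine ⟨(1 + T.Cd) * C0 / (ρ * (μ T.base).toReal), by have := T.Cd_pos; positivity,
    fun F m hm => ?_⟩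
  rw [ENNReal.ofReal_prod_of_nonneg fun i _ => by have := T.Cd_pos; positivity]
  exact T.measure_retCylinder_le_prod (fun n hn E hE hEsub =>
    T.measure_retTime_eq_retMap_mem_le htails hρ0 hn hE hEsub) F m hm 0 fun i _ => i.zero_le

/-- Lemma `lem_KFn`: on an expanding Young tower with `μ(Δ_n) ≤ C ρⁿ`, there is a constant
`C'` such that for every finite `F ⊂ ℕ` and positive integers `(n_i)_{i ∈ F}`, the measure
of `{x ∈ Δ₀ : ∀ i ∈ F, φ(U₀^i x) = n_i}` is at most `∏_{i ∈ F} C' ρ^{n_i}`. -/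
theorem return_time_cylinder_estimate
    {Δ : Type*} [MeasurableSpace Δ] {μ : Measure Δ} {U : Δ → Δ}
    (T : YoungTower μ U)
    (C0 ρ : ℝ) (hC0 : 0 < C0) (hρ0 : 0 < ρ) (hρ1 : ρ < 1) (htails : T.ExpTails C0 ρ) :
    ∃ C' : ℝ, 0 < C' ∧ ∀ (F : Finset ℕ) (m : ℕ → ℕ), (∀ i ∈ F, 0 < m i) →
      μ {x : Δ | x ∈ T.base ∧ ∀ i ∈ F, T.retTime (T.retMap^[i] x) = m i} ≤
        ENNReal.ofReal (∏ i ∈ F, C' * ρ ^ (m i)) :=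
  return_time_cylinder_estimate_general T C0 ρ hC0 hρ0 htails
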